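/- Let M ≥ 2 and suppose n ≥ 1 and a word a₀⋯a_{n−1} ∈ {L,R}^n has the number of R's equal to a multiple of M. Then the product J_{a_{n−1}} ⋯ J_{a_1} J_{a_0} is a diagonal matrix, where J_L = diag(2,1,...,1) and J_R is the M×M matrix with entries (J_R)_{1,M} = −2, (J_R)_{j+1,j} = 1, and 0 otherwise. Moreover all diagonal entries of the product have the same sign, positive if (number of R's)/M is even and negative if odd. -/

import Mathlib

/-- The companion-type twist matrix `J_R` (Jacobian of the twisted baker map on `X_R`). -/
def twistMatrix (M : ℕ) : Matrix (Fin M) (Fin M) ℝ :=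
  Matrix.of fun i j =>
    if (i : ℕ) = 0 ∧ (j : ℕ) = M - 1 then -2
    else if (i : ℕ) = (j : ℕ) + 1 then 1 else 0

/-- The Jacobian `J_L = diag(2,1,...,1)` of the twisted baker map on `X_L`. -/
def stretchMatrix (M : ℕ) : Matrix (Fin M) (Fin M) ℝ :=
  Matrix.diagonal fun i => if (i : ℕ) = 0 then 2 else 1

def shiftMat (M : ℕ) (t : Fin M) (d : Fin M → ℝ) : Matrix (Fin M) (Fin M) ℝ :=
  Matrix.of fun i j => if i = j + t then d j else 0

lemma shiftMat_zero (M : ℕ) [NeZero M] (d : Fin M → ℝ) :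
    shiftMat M 0 d = Matrix.diagonal d := by
  ext i j
  simp only [shiftMat, Matrix.of_apply, add_zero, Matrix.diagonal_apply]
  split_ifs with h1
  · rw [h1]
  · rfl

lemma shiftMat_mul (M : ℕ) [NeZero M] (s t : Fin M) (c d : Fin M → ℝ) :
    shiftMat M s c * shiftMat M t d = shiftMat M (s + t) fun j => c (j + t) * d j := by
  ext i j
  simp only [Matrix.mul_apply, shiftMat, Matrix.of_apply]
  rw [Finset.sum_eq_single (j + t)]
  · have h : j + t + s = j + (s + t) := by rw [add_assoc, add_comm t s]
    simp [h, ite_mul, zero_mul]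
  · intro k _ hk
    simp [hk]
  · simp

lemma one_val (M : ℕ) [NeZero M] (hM : 2 ≤ M) : ((1 : Fin M) : ℕ) = 1 := by
  rw [Fin.val_one']
  exact Nat.mod_eq_of_lt (by omega)

lemma val_add_one (M : ℕ) [NeZero M] (hM : 2 ≤ M) (j : Fin M) :
    ((j + 1 : Fin M) : ℕ) = if (j : ℕ) = M - 1 then 0 else (j : ℕ) + 1 := by
  rw [Fin.val_add, one_val M hM]
  have hj := j.isLt
  split_ifs with h
  · have : (j : ℕ) + 1 = M := by omega
    rw [this, Nat.mod_self]
  · exact Nat.mod_eq_of_lt (by omega)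

lemma twist_eq (M : ℕ) [NeZero M] (hM : 2 ≤ M) :
    twistMatrix M = shiftMat M 1 (fun j => if (j : ℕ) = M - 1 then -2 else 1) := by
  ext i j
  simp only [twistMatrix, shiftMat, Matrix.of_apply]
  have hv := val_add_one M hM j
  have hj := j.isLt; have hi := i.isLt
  by_cases h : i = j + 1
  · have h' : (i : ℕ) = ((j + 1 : Fin M) : ℕ) := by rw [h]
    rw [hv] at h'
    simp only [if_pos h]
    split_ifs at h' ⊢ <;> first | rfl | omega
  · have h' : (i : ℕ) ≠ ((j + 1 : Fin M) : ℕ) := fun hc => h (Fin.ext hc)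
    rw [hv] at h'
    simp only [if_neg h]
    split_ifs at h' ⊢ <;> first | rfl | omega

lemma stretch_eq (M : ℕ) [NeZero M] :
    stretchMatrix M = shiftMat M 0 (fun j => if (j : ℕ) = 0 then 2 else 1) := by
  rw [shiftMat_zero]
  rfl

open Fin.NatCast

lemma key (M : ℕ) [NeZero M] (hM : 2 ≤ M) (l : List Bool) :
    ∃ d : Fin M → ℝ,
      (l.map fun b => if b then twistMatrix M else stretchMatrix M).reverse.prod
        = shiftMat M ((l.count true : ℕ) : Fin M) d ∧
      ∀ j : Fin M, (Even (((j : ℕ) + l.count true) / M) → 0 < d j) ∧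
        (¬ Even (((j : ℕ) + l.count true) / M) → d j < 0) := by
  induction l with
  | nil =>
    refine ⟨fun _ => 1, ?_, ?_⟩
    · simp [shiftMat_zero]
    · intro j
      have hj := j.isLt
      have h0 : ((j : ℕ) + 0) / M = 0 := Nat.div_eq_of_lt (by omega)
      constructor
      · intro _; norm_num
      · intro h; exact absurd (by rw [List.count_nil, h0]; exact Even.zero) h
  | cons b l ih =>
    obtain ⟨d, hd, hs⟩ := ih
    rw [List.map_cons, List.reverse_cons, List.prod_append, List.prod_singleton, hd]
    cases b with
    | false =>
      rw [if_neg (by simp), stretch_eq, shiftMat_mul]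
      refine ⟨fun j => d (j + 0) * (if (j : ℕ) = 0 then 2 else 1), by simp [List.count_cons], ?_⟩
      intro j
      have hsj := hs j
      rw [List.count_cons]
      simp only [add_zero] at *
      constructor
      · intro h
        have := (hsj.1 h)
        have hc : (0 : ℝ) < if (j : ℕ) = 0 then 2 else 1 := by split_ifs <;> norm_num
        positivity
      · intro h
        have h1 := (hsj.2 h)
        have hc : (0 : ℝ) < if (j : ℕ) = 0 then 2 else 1 := by split_ifs <;> norm_num
        exact mul_neg_of_neg_of_pos h1 hc
    | true =>
      rw [if_pos rfl, twist_eq M hM, shiftMat_mul]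
      have hcast : ((List.count true (true :: l) : ℕ) : Fin M)
          = ((l.count true : ℕ) : Fin M) + 1 := by
        rw [List.count_cons]
        norm_num
      refine ⟨_, by rw [hcast], ?_⟩
      intro j
      have hj := j.isLt
      have hv := val_add_one M hM j
      rw [List.count_cons]
      simp only [beq_self_eq_true, if_pos] at *
      by_cases hjm : (j : ℕ) = M - 1
      · have hj1 : ((j + 1 : Fin M) : ℕ) = 0 := by rw [hv, if_pos hjm]
        have hsj := hs (j + 1)
        rw [hj1] at hsj
        have harith : ((j : ℕ) + (l.count true + 1)) / M = (0 + l.count true) / M + 1 := by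
          rw [hjm]
          have : M - 1 + (l.count true + 1) = l.count true + M := by omega
          rw [this, Nat.add_div_right _ (by omega), Nat.zero_add]
        rw [harith]
        simp only [if_pos hjm, Nat.even_add_one]
        constructor
        · intro h
          have h1 := hsj.2 h
          nlinarith
        · intro h
          have h1 := hsj.1 (not_not.mp h)
          nlinarith
      · have hj1 : ((j + 1 : Fin M) : ℕ) = (j : ℕ) + 1 := by rw [hv, if_neg hjm]
        have hsj := hs (j + 1)
        rw [hj1] at hsj
        have harith : ((j : ℕ) + (l.count true + 1)) = ((j : ℕ) + 1 + l.count true) := by omega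
        rw [harith]
        simp only [if_neg hjm, mul_one]
        exact hsj

lemma card_eq_count : ∀ (n : ℕ) (a : Fin n → Bool),
    (Finset.univ.filter fun k => a k = true).card = (List.ofFn a).count true := by
  intro n
  induction n with
  | zero => intro a; simp
  | succ m ih =>
    intro a
    rw [List.ofFn_succ, List.count_cons, ← ih]
    rw [Finset.card_filter, Fin.sum_univ_succ, ← Finset.card_filter]
    cases h : a 0 <;> simp [h, add_comm]

/-- If the number of `R`'s (encoded `true`) in a word is a multiple of `M`, the
corresponding product of Jacobians is diagonal, with all diagonal entries of the same
sign: positive iff (#R)/M is even. -/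
theorem product_diagonal_of_twist_multiple (M : ℕ) (hM : 2 ≤ M) (n : ℕ) (hn : 1 ≤ n)
    (a : Fin n → Bool)
    (ht : M ∣ (Finset.univ.filter fun k => a k = true).card) :
    ∃ d : Fin M → ℝ,
      (List.ofFn fun k : Fin n =>
        if a k then twistMatrix M else stretchMatrix M).reverse.prod = Matrix.diagonal d ∧
      (Even ((Finset.univ.filter fun k => a k = true).card / M) → ∀ i, 0 < d i) ∧
      (¬ Even ((Finset.univ.filter fun k => a k = true).card / M) → ∀ i, d i < 0) := by
  haveI : NeZero M := ⟨by omega⟩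
  obtain ⟨d, hd, hs⟩ := key M hM (List.ofFn a)
  have hofn : (List.ofFn fun k : Fin n => if a k then twistMatrix M else stretchMatrix M)
      = (List.ofFn a).map fun b => if b then twistMatrix M else stretchMatrix M := by
    rw [List.map_ofFn]
    rfl
  have hcard := card_eq_count n a
  rw [hcard] at ht ⊢
  obtain ⟨q, hq⟩ := ht
  have hcast : (((List.ofFn a).count true : ℕ) : Fin M) = 0 := by
    rw [Fin.natCast_eq_zero]
    exact ⟨q, hq⟩
  have hdiv : ∀ j : Fin M, ((j : ℕ) + (List.ofFn a).count true) / M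
      = (List.ofFn a).count true / M := by
    intro j
    have hj := j.isLt
    rw [hq, Nat.mul_comm, Nat.add_mul_div_right _ _ (by omega : 0 < M),
      Nat.mul_div_cancel _ (by omega : 0 < M), Nat.div_eq_of_lt hj, Nat.zero_add]
  refine ⟨d, ?_, ?_, ?_⟩
  · rw [hofn, hd, hcast, shiftMat_zero]
  · intro h i
    exact (hs i).1 (by rw [hdiv]; exact h)
  · intro h i
    exact (hs i).2 (by rw [hdiv]; exact h)
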